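/- arXiv:1704.01687 — 3 statements merged into one kernel-verified Lean document; each statement's English description precedes it below -/
import Mathlib

section
/- The largest diameter of a lattice (d,1)-polytope (convex hull of points in {0,1}^d) equals d. -/
open Set

noncomputable def edgeGraph (d : ℕ) (P : Set (Fin d → ℝ)) : SimpleGraph (Fin d → ℝ) where
  Adj a b := a ≠ b ∧ IsExtreme ℝ P (segment ℝ a b)
  symm := by
    constructor
    intro a b h
    exact ⟨h.1.symm, by rw [segment_symm]; exact h.2⟩
  loopless := by
    constructor
    intro a h
    exact h.1 rfl

/-- Edge-graph diameter of a polytope, as the sup of pairwise distances between vertices. -/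
noncomputable def polyDiam (d : ℕ) (P : Set (Fin d → ℝ)) : ℕ :=
  sSup {n : ℕ | ∃ u ∈ P.extremePoints ℝ, ∃ v ∈ P.extremePoints ℝ,
    (edgeGraph d P).dist u v = n}

/-- A lattice (d,k)-polytope: convex hull of a nonempty finite set of points in {0,…,k}^d. -/
def IsLatticePolytope (d k : ℕ) (P : Set (Fin d → ℝ)) : Prop :=
  ∃ V : Finset (Fin d → ℝ), V.Nonempty ∧
    (∀ x ∈ V, ∀ i, ∃ m : ℕ, m ≤ k ∧ x i = (m : ℝ)) ∧
    P = convexHull ℝ (V : Set (Fin d → ℝ))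

/-- δ(d,k): the largest edge-graph diameter of a lattice (d,k)-polytope. -/
noncomputable def deltaLP (d k : ℕ) : ℕ :=
  sSup {n : ℕ | ∃ P : Set (Fin d → ℝ), IsLatticePolytope d k P ∧ polyDiam d P = n}


/-! For a 0/1-polytope `P = conv V` and vertices `u ≠ v`, let `w` be a point of `V` nearest to `u`
in Hamming distance among those that differ from `u` only where `v` does. Fixing the coordinates
on which `u` and `w` agree cuts out a face of `P` containing no other point of `V`, so `[u, w]` is
an edge, and `w` is strictly closer to `v` in Hamming distance. Hence the edge distance is at most
the Hamming distance, at most `d`. Conversely, every edge of the unit cube changes a single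
coordinate, so opposite corners of the cube are at edge distance `d`. -/

theorem IsExtreme.subset_convexHull_inter {E : Type*} [AddCommGroup E] [Module ℝ E]
    [TopologicalSpace E] [T2Space E] [IsTopologicalAddGroup E] [ContinuousSMul ℝ E]
    [LocallyConvexSpace ℝ E] {V F : Set E} (hV : V.Finite)
    (hF : IsExtreme ℝ (convexHull ℝ V) F) (hFclosed : IsClosed F) (hFconv : Convex ℝ F) :
    F ⊆ convexHull ℝ (V ∩ F) := by
  have hFcompact : IsCompact F := (hV.isCompact_convexHull ℝ).of_isClosed_subset hFclosed hF.subset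
  have hext : F.extremePoints ℝ ⊆ V ∩ F := fun x hx =>
    ⟨extremePoints_convexHull_subset (hF.extremePoints_subset_extremePoints hx), hx.1⟩
  calc F = closure (convexHull ℝ (F.extremePoints ℝ)) :=
        (closure_convexHull_extremePoints hFcompact hFconv).symm
    _ ⊆ closure (convexHull ℝ (V ∩ F)) := closure_mono (convexHull_mono hext)
    _ = convexHull ℝ (V ∩ F) := ((hV.subset inter_subset_left).isClosed_convexHull ℝ).closure_eq

theorem isExtreme_inter_pi_singleton {ι : Type*} {P : Set (ι → ℝ)} (hP : P ⊆ Icc 0 1)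
    (I : Set ι) {a : ι → ℝ} (ha : ∀ i ∈ I, a i = 0 ∨ a i = 1) :
    IsExtreme ℝ P (P ∩ I.pi fun i => {a i}) := by
  refine ⟨inter_subset_left, fun x₁ hx₁ x₂ hx₂ x ⟨_, hx⟩ ⟨s, t, hs, ht, hst, hsum⟩ =>
    ⟨hx₁, fun i hi => ?_⟩⟩
  have hxi : s * x₁ i + t * x₂ i = a i := by
    rw [← hx i hi, ← hsum]; rfl
  have h₁ : x₁ i ∈ Icc (0 : ℝ) 1 := ⟨(hP hx₁).1 i, (hP hx₁).2 i⟩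
  have h₂ : x₂ i ∈ Icc (0 : ℝ) 1 := ⟨(hP hx₂).1 i, (hP hx₂).2 i⟩
  rcases ha i hi with h | h <;> rw [mem_singleton_iff, h] <;> rw [h] at hxi
  · exact le_antisymm (by nlinarith [h₂.1]) h₁.1
  · exact le_antisymm h₁.2 (by nlinarith [h₂.2])

section ZeroOne

variable {d : ℕ} {V : Finset (Fin d → ℝ)}

theorem eq_of_ne_of_ne_of_zero_or_one {x y z : ℝ} (hx : x = 0 ∨ x = 1) (hy : y = 0 ∨ y = 1)
    (hz : z = 0 ∨ z = 1) (hxz : x ≠ z) (hyz : y ≠ z) : x = y := by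
  rcases hx with rfl | rfl <;> rcases hy with rfl | rfl <;> rcases hz with rfl | rfl <;> simp_all

theorem convexHull_subset_Icc_of_zero_or_one (hV : ∀ x ∈ V, ∀ i, x i = 0 ∨ x i = 1) :
    convexHull ℝ (V : Set (Fin d → ℝ)) ⊆ Icc 0 1 :=
  convexHull_min (fun x hx => ⟨fun i => by rcases hV x hx i with h | h <;> simp [h],
    fun i => by rcases hV x hx i with h | h <;> simp [h]⟩) (convex_Icc 0 1)

theorem mem_extremePoints_convexHull_of_zero_or_one (hV : ∀ x ∈ V, ∀ i, x i = 0 ∨ x i = 1)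
    {v : Fin d → ℝ} (hv : v ∈ V) : v ∈ (convexHull ℝ (V : Set (Fin d → ℝ))).extremePoints ℝ := by
  have hface := isExtreme_inter_pi_singleton (convexHull_subset_Icc_of_zero_or_one hV) univ
    fun i _ => hV v hv i
  rwa [univ_pi_singleton, inter_eq_right.2 (singleton_subset_iff.2 (subset_convexHull ℝ _ hv)),
    isExtreme_singleton] at hface

theorem edgeGraph_adj_of_forall_agree (hV : ∀ x ∈ V, ∀ i, x i = 0 ∨ x i = 1)
    {u w : Fin d → ℝ} (hu : u ∈ V) (hw : w ∈ V) (huw : u ≠ w)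
    (honly : ∀ z ∈ V, (∀ i, u i = w i → z i = u i) → z = u ∨ z = w) :
    (edgeGraph d (convexHull ℝ (V : Set (Fin d → ℝ)))).Adj u w := by
  set P := convexHull ℝ (V : Set (Fin d → ℝ))
  set F := P ∩ {i | u i = w i}.pi fun i => {u i}
  have hface : IsExtreme ℝ P F := isExtreme_inter_pi_singleton
    (convexHull_subset_Icc_of_zero_or_one hV) _ fun i _ => hV u hu i
  have hFclosed : IsClosed F := (V.finite_toSet.isClosed_convexHull ℝ).inter
    (isClosed_set_pi fun i _ => isClosed_singleton)
  have hFconv : Convex ℝ F :=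
    (convex_convexHull ℝ _).inter (convex_pi fun i _ => convex_singleton _)
  have hVF : (V : Set (Fin d → ℝ)) ∩ F ⊆ {u, w} := fun z ⟨hz, _, hzF⟩ => honly z hz hzF
  have hFseg : F = segment ℝ u w := by
    rw [← convexHull_pair]
    refine ((hface.subset_convexHull_inter V.finite_toSet hFclosed hFconv).trans
      (convexHull_mono hVF)).antisymm (convexHull_min (pair_subset ?_ ?_) hFconv)
    · exact ⟨subset_convexHull ℝ _ hu, fun i _ => rfl⟩
    · exact ⟨subset_convexHull ℝ _ hw, fun i (hi : u i = w i) => hi.symm⟩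
  exact ⟨huw, hFseg ▸ hface⟩

theorem hammingDist_lt_of_agree {u v w : Fin d → ℝ} (hu : ∀ i, u i = 0 ∨ u i = 1)
    (hv : ∀ i, v i = 0 ∨ v i = 1) (hw : ∀ i, w i = 0 ∨ w i = 1) (hwu : w ≠ u)
    (hwagree : ∀ i, u i = v i → w i = u i) : hammingDist w v < hammingDist u v := by
  obtain ⟨i, hi⟩ := Function.ne_iff.1 hwu
  have hui : u i ≠ v i := fun h => hi (hwagree i h)
  refine Finset.card_lt_card ⟨fun j => ?_, fun hsub => ?_⟩
  · simp only [Finset.mem_filter, Finset.mem_univ, true_and]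
    exact mt fun h => (hwagree j h).trans h
  · have := hsub (by simpa using hui : i ∈ ({i | u i ≠ v i} : Finset (Fin d)))
    simp only [Finset.mem_filter, Finset.mem_univ, true_and] at this
    exact this (eq_of_ne_of_ne_of_zero_or_one (hw i) (hv i) (hu i) hi (Ne.symm hui))

theorem exists_adj_hammingDist_lt (hV : ∀ x ∈ V, ∀ i, x i = 0 ∨ x i = 1) {u v : Fin d → ℝ}
    (hu : u ∈ V) (hv : v ∈ V) (huv : u ≠ v) :
    ∃ w ∈ V, (edgeGraph d (convexHull ℝ (V : Set (Fin d → ℝ)))).Adj u w ∧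
      hammingDist w v < hammingDist u v := by
  set S := V.filter fun z => z ≠ u ∧ ∀ i, u i = v i → z i = u i
  have hvS : v ∈ S := Finset.mem_filter.2 ⟨hv, huv.symm, fun i hi => hi.symm⟩
  obtain ⟨w, hwS, hwmin⟩ := S.exists_min_image (hammingDist u) ⟨v, hvS⟩
  obtain ⟨hw, hwu, hwagree⟩ := Finset.mem_filter.1 hwS
  refine ⟨w, hw, edgeGraph_adj_of_forall_agree hV hu hw (Ne.symm hwu) fun z hz hzagree => ?_,
    hammingDist_lt_of_agree (hV u hu) (hV v hv) (hV w hw) hwu hwagree⟩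
  by_contra! hz'
  have hzS : z ∈ S := Finset.mem_filter.2 ⟨hz, hz'.1, fun i hi => hzagree i (hwagree i hi).symm⟩
  have hsub : ({i | u i ≠ z i} : Finset (Fin d)) ⊆ ({i | u i ≠ w i} : Finset (Fin d)) := by
    intro i
    simp only [Finset.mem_filter, Finset.mem_univ, true_and]
    exact mt fun h => (hzagree i h).symm
  have heq := Finset.eq_of_subset_of_card_le hsub (hwmin z hzS)
  refine hz'.2 (funext fun i => ?_)
  by_cases h : u i = w i
  · rw [hzagree i h, h]
  · have hzi : u i ≠ z i := by
      have hi : i ∈ ({i | u i ≠ w i} : Finset (Fin d)) := by simpa using h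
      rw [← heq] at hi
      simpa using hi
    exact eq_of_ne_of_ne_of_zero_or_one (hV z hz i) (hV w hw i) (hV u hu i)
      (Ne.symm hzi) (Ne.symm h)

theorem exists_walk_length_le_hammingDist (hV : ∀ x ∈ V, ∀ i, x i = 0 ∨ x i = 1)
    {u v : Fin d → ℝ} (hu : u ∈ V) (hv : v ∈ V) :
    ∃ p : (edgeGraph d (convexHull ℝ (V : Set (Fin d → ℝ)))).Walk u v,
      p.length ≤ hammingDist u v := by
  induction hn : hammingDist u v using Nat.strong_induction_on generalizing u with
  | _ n ih =>
    rcases eq_or_ne u v with rfl | huv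
    · exact ⟨.nil, by simp⟩
    obtain ⟨w, hw, hadj, hlt⟩ := exists_adj_hammingDist_lt hV hu hv huv
    obtain ⟨q, hq⟩ := ih _ (hn ▸ hlt) hw rfl
    exact ⟨.cons hadj q, by rw [SimpleGraph.Walk.length_cons]; omega⟩

end ZeroOne

theorem mem_upperBounds_edgeGraph_dist {d : ℕ} {P : Set (Fin d → ℝ)}
    (hP : IsLatticePolytope d 1 P) :
    d ∈ upperBounds {n : ℕ | ∃ u ∈ P.extremePoints ℝ, ∃ v ∈ P.extremePoints ℝ,
      (edgeGraph d P).dist u v = n} := by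
  obtain ⟨V, -, hV, rfl⟩ := hP
  have hV01 : ∀ x ∈ V, ∀ i, x i = 0 ∨ x i = 1 := fun x hx i => by
    obtain ⟨m, hm, hxi⟩ := hV x hx i
    interval_cases m <;> simp [hxi]
  rintro _ ⟨u, hu, v, hv, rfl⟩
  obtain ⟨p, hp⟩ := exists_walk_length_le_hammingDist hV01
    (extremePoints_convexHull_subset hu) (extremePoints_convexHull_subset hv)
  calc _ ≤ p.length := SimpleGraph.dist_le p
    _ ≤ hammingDist u v := hp
    _ ≤ d := hammingDist_le_card_fintype.trans_eq (Fintype.card_fin d)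

theorem polyDiam_le_of_isLatticePolytope {d : ℕ} {P : Set (Fin d → ℝ)}
    (hP : IsLatticePolytope d 1 P) : polyDiam d P ≤ d :=
  csSup_le' (mem_upperBounds_edgeGraph_dist hP)

theorem hammingDist_le_one_of_adj_edgeGraph_pi {d : ℕ} {t : Fin d → Set ℝ} {a b : Fin d → ℝ}
    (h : (edgeGraph d (univ.pi t)).Adj a b) : hammingDist a b ≤ 1 := by
  obtain ⟨-, hface⟩ := h
  by_contra! hlt
  obtain ⟨i, hi, j, hj, hij⟩ := Finset.one_lt_card.1 hlt
  simp only [Finset.mem_filter, Finset.mem_univ, true_and] at hi hj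
  have ha : a ∈ univ.pi t := hface.subset (left_mem_segment ℝ a b)
  have hb : b ∈ univ.pi t := hface.subset (right_mem_segment ℝ a b)
  -- `e` and `e'` swap the `i`-th coordinates of `a` and `b`: the open segment `(e, e')` meets
  -- `[a, b]` in its midpoint, but `e ∉ [a, b]` since `a` and `b` also differ at `j`.
  set e := Function.update a i (b i)
  set e' := Function.update b i (a i)
  have he : e ∈ univ.pi t := fun k _ => by
    rcases eq_or_ne k i with rfl | hk
    · simpa [e] using hb k trivial
    · simpa [e, hk] using ha k trivial
  have he' : e' ∈ univ.pi t := fun k _ => by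
    rcases eq_or_ne k i with rfl | hk
    · simpa [e'] using ha k trivial
    · simpa [e', hk] using hb k trivial
  have hmid : (1 / 2 : ℝ) • e + (1 / 2 : ℝ) • e' = (1 / 2 : ℝ) • a + (1 / 2 : ℝ) • b := by
    ext k
    rcases eq_or_ne k i with rfl | hk
    · simp [e, e', add_comm]
    · simp [e, e', hk]
  obtain ⟨s, r, -, -, hsr, hsum⟩ := hface.left_mem_of_mem_openSegment he he'
    ⟨1 / 2, 1 / 2, by norm_num, by norm_num, by norm_num, rfl⟩
    ⟨1 / 2, 1 / 2, by norm_num, by norm_num, by norm_num, hmid⟩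
  have hsi : s * a i + r * b i = b i := by simpa [e] using congrFun hsum i
  have hsj : s * a j + r * b j = a j := by simpa [e, Ne.symm hij] using congrFun hsum j
  have hs : s = 0 := (mul_eq_zero.1 (by linear_combination hsi - b i * hsr :
    s * (a i - b i) = 0)).resolve_right (sub_ne_zero.2 hi)
  have hr : r = 0 := (mul_eq_zero.1 (by linear_combination hsj - a j * hsr :
    r * (b j - a j) = 0)).resolve_right (sub_ne_zero.2 (Ne.symm hj))
  linarith

theorem hammingDist_le_length_of_forall_adj {ι : Type*} [Fintype ι] {β : ι → Type*}
    [∀ i, DecidableEq (β i)] {G : SimpleGraph (∀ i, β i)}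
    (hG : ∀ a b, G.Adj a b → hammingDist a b ≤ 1) {x y : ∀ i, β i} (p : G.Walk x y) :
    hammingDist x y ≤ p.length := by
  induction p with
  | nil => simp
  | @cons a b c hab q ih =>
    calc hammingDist a c ≤ hammingDist a b + hammingDist b c := hammingDist_triangle a b c
      _ ≤ 1 + q.length := add_le_add (hG a b hab) ih
      _ = (SimpleGraph.Walk.cons hab q).length := by
        rw [SimpleGraph.Walk.length_cons, add_comm]

noncomputable def unitCubeVertices (d : ℕ) : Finset (Fin d → ℝ) :=
  Fintype.piFinset fun _ => {0, 1}

theorem mem_unitCubeVertices {d : ℕ} {x : Fin d → ℝ} :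
    x ∈ unitCubeVertices d ↔ ∀ i, x i = 0 ∨ x i = 1 := by
  simp [unitCubeVertices]

theorem convexHull_unitCubeVertices (d : ℕ) :
    convexHull ℝ (unitCubeVertices d : Set (Fin d → ℝ)) = univ.pi fun _ => segment ℝ 0 1 := by
  simp [unitCubeVertices, convexHull_pair]

theorem isLatticePolytope_unitCube (d : ℕ) :
    IsLatticePolytope d 1 (convexHull ℝ (unitCubeVertices d : Set (Fin d → ℝ))) := by
  refine ⟨unitCubeVertices d, ⟨0, mem_unitCubeVertices.2 fun _ => .inl rfl⟩,
    fun x hx i => ?_, rfl⟩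
  rcases mem_unitCubeVertices.1 hx i with h | h
  · exact ⟨0, zero_le_one, by simp [h]⟩
  · exact ⟨1, le_rfl, by simp [h]⟩

theorem le_polyDiam_unitCube (d : ℕ) :
    d ≤ polyDiam d (convexHull ℝ (unitCubeVertices d : Set (Fin d → ℝ))) := by
  have hV : ∀ x ∈ unitCubeVertices d, ∀ i, x i = 0 ∨ x i = 1 := fun _ => mem_unitCubeVertices.1
  have h0 : (0 : Fin d → ℝ) ∈ unitCubeVertices d := mem_unitCubeVertices.2 fun _ => .inl rfl
  have h1 : (1 : Fin d → ℝ) ∈ unitCubeVertices d := mem_unitCubeVertices.2 fun _ => .inr rfl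
  have hadj : ∀ a b, (edgeGraph d (convexHull ℝ (unitCubeVertices d : Set (Fin d → ℝ)))).Adj a b →
      hammingDist a b ≤ 1 := by
    rw [convexHull_unitCubeVertices]
    exact fun a b => hammingDist_le_one_of_adj_edgeGraph_pi
  obtain ⟨p, -⟩ := exists_walk_length_le_hammingDist hV h0 h1
  obtain ⟨q, hq⟩ := p.reachable.exists_walk_length_eq_dist
  calc d = hammingDist (0 : Fin d → ℝ) 1 := by simp [hammingDist]
    _ ≤ q.length := hammingDist_le_length_of_forall_adj hadj q
    _ = _ := hq
    _ ≤ _ := le_csSup ⟨d, mem_upperBounds_edgeGraph_dist (isLatticePolytope_unitCube d)⟩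
      ⟨0, mem_extremePoints_convexHull_of_zero_or_one hV h0,
        1, mem_extremePoints_convexHull_of_zero_or_one hV h1, rfl⟩

theorem naddef_delta_d_1_general (d : ℕ) : deltaLP d 1 = d := by
  have hbound : d ∈ upperBounds {n : ℕ | ∃ P : Set (Fin d → ℝ),
      IsLatticePolytope d 1 P ∧ polyDiam d P = n} := by
    rintro _ ⟨P, hP, rfl⟩
    exact polyDiam_le_of_isLatticePolytope hP
  exact le_antisymm (csSup_le' hbound) ((le_polyDiam_unitCube d).trans
    (le_csSup ⟨d, hbound⟩ ⟨_, isLatticePolytope_unitCube d, rfl⟩))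

theorem naddef_delta_d_1 (d : ℕ) (hd : 1 ≤ d) : deltaLP d 1 = d :=
  naddef_delta_d_1_general d
end

section
/- For all d ≥ 1 and k ≥ 1, the diameter of any lattice (d,k)-polytope is at most kd. -/
open Set

/-! Induct on the set of coordinates that are not constant on the polytope. For such a
coordinate `i`, following edges along which `x i` strictly increases (the simplex method) leads
from any vertex to the face maximizing `x i`; since `x i` is integral on vertices, this takes at
most `max - u i` steps, and likewise `u i - min` steps to the face minimizing `x i`. Sending two
vertices `u`, `v` to the same face costs `(max - u i) + (max - v i)` or `(u i - min) + (v i - min)`;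
these add up to `2 (max - min) ≤ 2 k`, so one of them is at most `k`, and inside that face the
two vertices reached are joined by induction.

An improving edge exists at every non-optimal vertex `u`: the cone generated by the vertices
seen from `u` is pointed and finitely generated, so an improving direction gives an improving
extreme ray, and that ray meets the polytope in an edge. -/

open PointedCone

section Cone
variable {E : Type*} [AddCommGroup E] [Module ℝ E]

theorem PointedCone.isFaceOf_hull_singleton_of_notMem_hull_sdiff {G : Set E} {g : E}
    (hG : (hull ℝ G).lineal = ⊥) (hg : g ∈ G) (hgirr : g ∉ hull ℝ (G \ {g})) :
    (hull ℝ {g}).IsFaceOf (hull ℝ G) := by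
  have hzero : ∀ x ∈ hull ℝ G, -x ∈ hull ℝ G → x = 0 :=
    fun x hx hnx => (Submodule.eq_bot_iff _).1 hG x ⟨hx, hnx⟩
  have hsub : hull ℝ (G \ {g}) ≤ hull ℝ G := Submodule.span_mono sdiff_subset
  have hdecomp : ∀ x ∈ hull ℝ G, ∃ a : ℝ, 0 ≤ a ∧ ∃ x₀ ∈ hull ℝ (G \ {g}), x = a • g + x₀ := by
    intro x hx
    rw [← insert_sdiff_self_of_mem hg, Submodule.mem_span_insert] at hx
    obtain ⟨a, x₀, hx₀, rfl⟩ := hx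
    exact ⟨a, a.2, x₀, hx₀, rfl⟩
  refine .of_mem_of_add_mem_left (Submodule.span_mono (singleton_subset_iff.2 hg)) ?_
  intro x y hx hy hxy
  obtain ⟨a, ha, x₀, hx₀, rfl⟩ := hdecomp x hx
  obtain ⟨b, -, y₀, hy₀, rfl⟩ := hdecomp y hy
  obtain ⟨⟨t, ht⟩, hxy⟩ := Submodule.mem_span_singleton.1 hxy
  simp only [Nonneg.mk_smul] at hxy
  -- If `a + b < t` then `g` is redundant; otherwise salience forces `x₀ = 0`.
  have hsum : x₀ + y₀ = (t - a - b) • g := by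
    rw [sub_sub, sub_smul, hxy, add_smul]; abel
  rcases lt_or_ge (a + b) t with hlt | hle
  · have hmem : (t - a - b)⁻¹ • (x₀ + y₀) ∈ hull ℝ (G \ {g}) :=
      smul_mem _ (inv_nonneg.2 (by linarith)) (add_mem hx₀ hy₀)
    rw [hsum, smul_smul, inv_mul_cancel₀ (by linarith), one_smul] at hmem
    exact absurd hmem hgirr
  · have hx₀y₀ : x₀ + y₀ = 0 := hzero _ (hsub (add_mem hx₀ hy₀)) <| by
      rw [hsum, ← neg_smul]
      exact smul_mem _ (by linarith) (Submodule.subset_span hg)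
    have hx₀0 : x₀ = 0 := hzero _ (hsub hx₀) <| by
      rw [neg_eq_of_add_eq_zero_right hx₀y₀]; exact hsub hy₀
    rw [hx₀0, add_zero]
    exact smul_mem _ ha (Submodule.subset_span rfl)

theorem PointedCone.exists_isFaceOf_hull_singleton_of_pos {G : Set E} (hfin : G.Finite)
    (hG : (hull ℝ G).lineal = ⊥) (c : E →ₗ[ℝ] ℝ) {x : E} (hx : x ∈ hull ℝ G) (hcx : 0 < c x) :
    ∃ r, 0 < c r ∧ (hull ℝ {r}).IsFaceOf (hull ℝ G) := by
  -- Pass to an inclusion-minimal generating subset, in which no generator is redundant.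
  obtain ⟨G', ⟨hG'G, hG'⟩, hmin⟩ := Set.Finite.exists_minimal
    (s := {G' | G' ⊆ G ∧ hull ℝ G' = hull ℝ G})
    (hfin.finite_subsets.subset fun _ h => h.1) ⟨G, subset_rfl, rfl⟩
  have hirr : ∀ g ∈ G', g ∉ hull ℝ (G' \ {g}) := by
    intro g hg hmem
    have hspan : hull ℝ (G' \ {g}) = hull ℝ G := by
      refine le_antisymm (hG' ▸ Submodule.span_mono sdiff_subset) (hG' ▸ Submodule.span_le.2 ?_)
      intro y hy
      by_cases hyg : y = g
      · exact hyg ▸ hmem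
      · exact Submodule.subset_span ⟨hy, hyg⟩
    exact (hmin ⟨sdiff_subset.trans hG'G, hspan⟩ sdiff_subset hg).2 rfl
  obtain ⟨g, hg, hcg⟩ : ∃ g ∈ G', 0 < c g := by
    by_contra! h
    have hle : hull ℝ G' ≤ (positive ℝ ℝ).comap (-c) :=
      Submodule.span_le.2 fun y hy => by simpa using h y hy
    exact hcx.not_ge (by simpa using hle (hG' ▸ hx))
  exact ⟨g, hcg, hG' ▸ isFaceOf_hull_singleton_of_notMem_hull_sdiff (hG' ▸ hG) hg (hirr g hg)⟩

theorem sub_mem_hull_image_sub {V : Set E} {q : E} (u : E) (hq : q ∈ convexHull ℝ V) :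
    q - u ∈ hull ℝ ((· - u) '' V) := by
  refine convexHull_min (t := (· - u) ⁻¹' hull ℝ ((· - u) '' V))
    (fun v hv => Submodule.subset_span ⟨v, hv, rfl⟩) ?_ hq
  simpa [sub_eq_neg_add] using (hull ℝ ((· - u) '' V)).convex.translate_preimage_right (-u)

theorem exists_pos_add_smul_mem_of_mem_hull {C S : Set E} (hC : Convex ℝ C) {u : E} (hu : u ∈ C)
    (hS : S ⊆ C) {x : E} (hx : x ∈ hull ℝ ((· - u) '' S)) : ∃ t : ℝ, 0 < t ∧ u + t • x ∈ C := by
  set D := (u + ·) ⁻¹' C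
  have hD : Convex ℝ D := hC.translate_preimage_right u
  have hpointed : (ConvexCone.hull ℝ D).Pointed := ConvexCone.subset_hull (by simpa [D] using hu)
  have hle : hull ℝ ((· - u) '' S) ≤ (ConvexCone.hull ℝ D).toPointedCone hpointed := by
    refine Submodule.span_le.2 ?_
    rintro _ ⟨s, hs, rfl⟩
    exact ConvexCone.subset_hull (by simpa [D] using hS hs)
  obtain ⟨r, hr, y, hy, rfl⟩ := (ConvexCone.mem_hull_of_convex hD).1 (hle hx)
  refine ⟨r⁻¹, inv_pos.2 hr, ?_⟩
  rwa [smul_smul, inv_mul_cancel₀ hr.ne', one_smul]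

theorem lineal_hull_image_sub_eq_bot {V : Set E} {u : E}
    (hu : u ∈ (convexHull ℝ V).extremePoints ℝ) : (hull ℝ ((· - u) '' V)).lineal = ⊥ := by
  refine (Submodule.eq_bot_iff _).2 fun x ⟨hx, hnx⟩ => ?_
  have hV := subset_convexHull ℝ V
  obtain ⟨t, ht, htx⟩ := exists_pos_add_smul_mem_of_mem_hull (convex_convexHull ℝ V) hu.1 hV hx
  obtain ⟨s, hs, hsx⟩ := exists_pos_add_smul_mem_of_mem_hull (convex_convexHull ℝ V) hu.1 hV hnx
  have hseg : u ∈ openSegment ℝ (u + t • x) (u + s • -x) := by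
    refine ⟨s / (t + s), t / (t + s), by positivity, by positivity, by field_simp; ring, ?_⟩
    match_scalars <;> field_simp <;> ring
  simpa [ht.ne'] using hu.2 htx hsx hseg

theorem IsExtreme.sep_sub_mem {A K F : Set E} {u : E} (hA : ∀ x ∈ A, x - u ∈ K)
    (hF : IsExtreme ℝ K F) : IsExtreme ℝ A {x ∈ A | x - u ∈ F} := by
  refine ⟨sep_subset _ _, fun x₁ hx₁ x₂ hx₂ x hx hseg => ⟨hx₁, hF.2 (hA _ hx₁) (hA _ hx₂) hx.2 ?_⟩⟩
  simpa [sub_eq_neg_add] using (mem_openSegment_translate ℝ (-u)).2 hseg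

theorem right_mem_extremePoints_segment (x y : E) : y ∈ (segment ℝ x y).extremePoints ℝ := by
  rw [mem_extremePoints_iff_left, segment_eq_image']
  refine ⟨⟨1, right_mem_Icc.2 zero_le_one, by simp⟩, ?_⟩
  rintro _ ⟨a, ⟨ha₀, ha₁⟩, rfl⟩ _ ⟨b, ⟨hb₀, hb₁⟩, rfl⟩ ⟨α, β, hα, hβ, hαβ, hy⟩
  have hcoef : (1 - (α * a + β * b)) • (y - x) = 0 := by
    linear_combination (norm := module) -hy + hαβ • x
  rcases smul_eq_zero.1 hcoef with h | h
  · have : a = 1 := by nlinarith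
    simp [this]
  · simp [(sub_eq_zero.1 h).symm]

end Cone

section Edge
variable {E : Type*} [NormedAddCommGroup E] [NormedSpace ℝ E]

theorem exists_sep_sub_mem_hull_singleton_eq_segment {C : Set E} (hC : IsCompact C)
    (hCc : Convex ℝ C) {u r : E} (hu : u ∈ C) (hr : r ≠ 0) {t₁ : ℝ} (ht₁ : 0 < t₁)
    (h₁ : u + t₁ • r ∈ C) :
    ∃ t : ℝ, 0 < t ∧ {x ∈ C | x - u ∈ hull ℝ {r}} = segment ℝ u (u + t • r) := by
  set T := {s : ℝ | 0 ≤ s ∧ u + s • r ∈ C}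
  have hTc : IsClosed T :=
    (isClosed_le continuous_const continuous_id).inter (hC.isClosed.preimage (by fun_prop))
  have hTb : BddAbove T := by
    obtain ⟨R, hR⟩ := isBounded_iff_forall_norm_le.1 hC.isBounded
    refine ⟨(R + ‖u‖) / ‖r‖, fun s ⟨hs, hsC⟩ => (le_div_iff₀ (norm_pos_iff.2 hr)).2 ?_⟩
    calc s * ‖r‖ = ‖(u + s • r) - u‖ := by simp [norm_smul, abs_of_nonneg hs]
      _ ≤ R + ‖u‖ := (norm_sub_le _ _).trans (by linarith [hR _ hsC])
  set t := sSup T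
  have ht : t ∈ T := hTc.csSup_mem ⟨t₁, ht₁.le, h₁⟩ hTb
  have htpos : 0 < t := ht₁.trans_le (le_csSup hTb ⟨ht₁.le, h₁⟩)
  refine ⟨t, htpos, Set.ext fun x => ⟨fun ⟨hxC, hxr⟩ => ?_, fun hx => ?_⟩⟩
  · obtain ⟨⟨a, ha⟩, hax⟩ := Submodule.mem_span_singleton.1 hxr
    rw [Nonneg.mk_smul, eq_sub_iff_add_eq'] at hax
    have hat : a ≤ t := le_csSup hTb ⟨ha, hax ▸ hxC⟩
    rw [segment_eq_image']
    refine ⟨a / t, ⟨by positivity, div_le_one_of_le₀ hat htpos.le⟩, ?_⟩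
    simp only [← hax, add_sub_cancel_left, smul_smul, div_mul_cancel₀ _ htpos.ne']
  · refine ⟨hCc.segment_subset hu ht.2 hx, ?_⟩
    rw [segment_eq_image'] at hx
    obtain ⟨θ, ⟨hθ, -⟩, rfl⟩ := hx
    rw [add_sub_cancel_left, add_sub_cancel_left, smul_smul]
    exact smul_mem _ (mul_nonneg hθ ht.1) (Submodule.subset_span rfl)

theorem exists_isExtreme_segment_of_lt {V : Set E} (hV : V.Finite) {u : E}
    (hu : u ∈ (convexHull ℝ V).extremePoints ℝ) (c : E →ₗ[ℝ] ℝ) {p : E}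
    (hp : p ∈ convexHull ℝ V) (hup : c u < c p) :
    ∃ w ∈ (convexHull ℝ V).extremePoints ℝ, c u < c w ∧
      IsExtreme ℝ (convexHull ℝ V) (segment ℝ u w) := by
  obtain ⟨r, hcr, hface⟩ := exists_isFaceOf_hull_singleton_of_pos (hV.image _)
    (lineal_hull_image_sub_eq_bot hu) c (sub_mem_hull_image_sub u hp) (by simpa using hup)
  have hr : r ≠ 0 := by rintro rfl; simp at hcr
  obtain ⟨t₁, ht₁, h₁⟩ := exists_pos_add_smul_mem_of_mem_hull (convex_convexHull ℝ V) hu.1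
    (subset_convexHull ℝ V) (hface.le (Submodule.subset_span rfl))
  obtain ⟨t, ht, hseg⟩ := exists_sep_sub_mem_hull_singleton_eq_segment
    (hV.isCompact_convexHull ℝ) (convex_convexHull ℝ V) hu.1 hr ht₁ h₁
  have hext : IsExtreme ℝ (convexHull ℝ V) (segment ℝ u (u + t • r)) :=
    hseg ▸ hface.isExtreme.sep_sub_mem fun x hx => sub_mem_hull_image_sub u hx
  refine ⟨u + t • r, hext.extremePoints_subset_extremePoints
    (right_mem_extremePoints_segment _ _), ?_, hext⟩
  simpa using mul_pos ht hcr

theorem IsExposed.convexHull_extremePoints_eq {V F : Set E} (hV : V.Finite)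
    (hF : IsExposed ℝ (convexHull ℝ V) F) : convexHull ℝ (F.extremePoints ℝ) = F := by
  have hfin : (F.extremePoints ℝ).Finite := hV.subset
    (hF.isExtreme.extremePoints_subset_extremePoints.trans extremePoints_convexHull_subset)
  rw [← (hfin.isClosed_convexHull ℝ).closure_eq]
  exact closure_convexHull_extremePoints (hF.isCompact (hV.isCompact_convexHull ℝ))
    (hF.convex (convex_convexHull ℝ V))

theorem mem_toExposed_convexHull_of_forall_le {V : Set E} (l : StrongDual ℝ E) {u : E}
    (hu : u ∈ convexHull ℝ V) (h : ∀ x ∈ V, l x ≤ l u) : u ∈ l.toExposed (convexHull ℝ V) :=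
  ⟨hu, fun _ hy => convexHull_min h (convex_halfSpace_le l.isLinear (l u)) hy⟩

end Edge

section Walks
open SimpleGraph
variable {d : ℕ}

theorem edgeGraph_le_of_isExtreme {P F : Set (Fin d → ℝ)} (h : IsExtreme ℝ P F) :
    edgeGraph d F ≤ edgeGraph d P :=
  fun _ _ hab => ⟨hab.1, h.trans hab.2⟩

theorem exists_walk_to_toExposed {V : Set (Fin d → ℝ)} (hV : V.Finite)
    (l : StrongDual ℝ (Fin d → ℝ)) (hl : ∀ x ∈ V, ∃ m : ℤ, l x = m) {u : Fin d → ℝ}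
    (hu : u ∈ (convexHull ℝ V).extremePoints ℝ) :
    ∃ w ∈ (convexHull ℝ V).extremePoints ℝ, w ∈ l.toExposed (convexHull ℝ V) ∧
      ∃ p : (edgeGraph d (convexHull ℝ V)).Walk u w, (p.length : ℝ) ≤ l w - l u := by
  obtain ⟨B, hB⟩ := (hV.image l).bddAbove
  suffices key : ∀ n : ℕ, ∀ u ∈ (convexHull ℝ V).extremePoints ℝ, (∀ x ∈ V, l x ≤ l u + n) →
      ∃ w ∈ (convexHull ℝ V).extremePoints ℝ, w ∈ l.toExposed (convexHull ℝ V) ∧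
        ∃ p : (edgeGraph d (convexHull ℝ V)).Walk u w, (p.length : ℝ) ≤ l w - l u from
    key _ u hu fun x hx => by linarith [hB ⟨x, hx, rfl⟩, Nat.le_ceil (B - l u)]
  intro n
  induction n with
  | zero =>
    intro u hu hle
    exact ⟨u, hu, mem_toExposed_convexHull_of_forall_le l hu.1 (by simpa using hle), .nil, by simp⟩
  | succ n ih =>
    intro u hu hle
    by_cases hmax : ∀ x ∈ V, l x ≤ l u
    · exact ⟨u, hu, mem_toExposed_convexHull_of_forall_le l hu.1 hmax, .nil, by simp⟩
    push Not at hmax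
    obtain ⟨x, hxV, hx⟩ := hmax
    obtain ⟨w, hw, huw, hseg⟩ :=
      exists_isExtreme_segment_of_lt hV hu l (subset_convexHull ℝ V hxV) hx
    replace huw : l u < l w := huw
    -- `l` is integral on the vertices, so each edge climbs by at least one.
    have hstep : l u + 1 ≤ l w := by
      obtain ⟨m, hm⟩ := hl u (extremePoints_convexHull_subset hu)
      obtain ⟨m', hm'⟩ := hl w (extremePoints_convexHull_subset hw)
      rw [hm, hm'] at huw ⊢
      exact_mod_cast Int.add_one_le_of_lt (by exact_mod_cast huw)
    obtain ⟨w', hw', hw'F, p, hp⟩ := ih w hw fun y hy => by push_cast at hle; linarith [hle y hy]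
    have hadj : (edgeGraph d (convexHull ℝ V)).Adj u w := ⟨ne_of_apply_ne l huw.ne, hseg⟩
    refine ⟨w', hw', hw'F, .cons hadj p, ?_⟩
    simp only [Walk.length_cons, Nat.cast_add, Nat.cast_one]
    linarith

theorem exists_walk_through_toExposed {V : Set (Fin d → ℝ)} (hV : V.Finite)
    (l : StrongDual ℝ (Fin d → ℝ)) (hl : ∀ x ∈ V, ∃ m : ℤ, l x = m) {M : ℝ}
    (hM : ∀ x ∈ V, l x ≤ M) {L : ℕ}
    (hface : ∀ u ∈ (l.toExposed (convexHull ℝ V)).extremePoints ℝ,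
      ∀ v ∈ (l.toExposed (convexHull ℝ V)).extremePoints ℝ,
      ∃ p : (edgeGraph d (l.toExposed (convexHull ℝ V))).Walk u v, p.length ≤ L)
    {u v : Fin d → ℝ} (hu : u ∈ (convexHull ℝ V).extremePoints ℝ)
    (hv : v ∈ (convexHull ℝ V).extremePoints ℝ) :
    ∃ p : (edgeGraph d (convexHull ℝ V)).Walk u v, (p.length : ℝ) ≤ (M - l u) + (M - l v) + L := by
  have hF : IsExtreme ℝ (convexHull ℝ V) (l.toExposed (convexHull ℝ V)) :=
    ContinuousLinearMap.toExposed.isExposed.isExtreme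
  have hFext : ∀ w ∈ (convexHull ℝ V).extremePoints ℝ, w ∈ l.toExposed (convexHull ℝ V) →
      w ∈ (l.toExposed (convexHull ℝ V)).extremePoints ℝ :=
    fun w hw hwF => inter_extremePoints_subset_extremePoints_of_subset hF.subset ⟨hwF, hw⟩
  obtain ⟨u', hu', hu'F, p, hp⟩ := exists_walk_to_toExposed hV l hl hu
  obtain ⟨v', hv', hv'F, q, hq⟩ := exists_walk_to_toExposed hV l hl hv
  obtain ⟨r, hr⟩ := hface u' (hFext u' hu' hu'F) v' (hFext v' hv' hv'F)
  refine ⟨p.append ((r.mapLe (edgeGraph_le_of_isExtreme hF)).append q.reverse), ?_⟩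
  have hu'M := hM u' (extremePoints_convexHull_subset hu')
  have hv'M := hM v' (extremePoints_convexHull_subset hv')
  simp only [Walk.length_append, Walk.length_reverse, Walk.length_mapLe, Nat.cast_add]
  linarith [(Nat.cast_le (α := ℝ)).2 hr]

theorem exists_walk_length_le_mul_card (k : ℕ) (I : Finset (Fin d)) {V : Set (Fin d → ℝ)}
    (hV : V.Finite) (hk : ∀ x ∈ V, ∀ j, ∃ m : ℕ, m ≤ k ∧ x j = m)
    (hI : ∀ x ∈ V, ∀ y ∈ V, ∀ j ∉ I, x j = y j) {u v : Fin d → ℝ}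
    (hu : u ∈ (convexHull ℝ V).extremePoints ℝ) (hv : v ∈ (convexHull ℝ V).extremePoints ℝ) :
    ∃ p : (edgeGraph d (convexHull ℝ V)).Walk u v, p.length ≤ k * I.card := by
  induction I using Finset.induction_on generalizing V u v with
  | empty =>
    obtain rfl : u = v := funext fun j => hI u (extremePoints_convexHull_subset hu) v
      (extremePoints_convexHull_subset hv) j (Finset.notMem_empty j)
    exact ⟨.nil, by simp⟩
  | insert i I hi ih =>
    -- A face on which `x i` is constant is again a lattice polytope, constant outside `I`.
    have hface : ∀ l : StrongDual ℝ (Fin d → ℝ), (∀ x y, l x = l y → x i = y i) →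
        ∀ u ∈ (l.toExposed (convexHull ℝ V)).extremePoints ℝ,
        ∀ v ∈ (l.toExposed (convexHull ℝ V)).extremePoints ℝ,
        ∃ p : (edgeGraph d (l.toExposed (convexHull ℝ V))).Walk u v, p.length ≤ k * I.card := by
      intro l hl u hu v hv
      have hexp : IsExposed ℝ (convexHull ℝ V) (l.toExposed (convexHull ℝ V)) :=
        ContinuousLinearMap.toExposed.isExposed
      have hsub : (l.toExposed (convexHull ℝ V)).extremePoints ℝ ⊆ V :=
        hexp.isExtreme.extremePoints_subset_extremePoints.trans extremePoints_convexHull_subset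
      rw [← hexp.convexHull_extremePoints_eq hV] at hu hv ⊢
      refine ih (hV.subset hsub) (fun x hx => hk x (hsub hx)) (fun x hx y hy j hj => ?_) hu hv
      by_cases hji : j = i
      · subst hji
        exact hl x y (le_antisymm ((extremePoints_subset hy).2 x (extremePoints_subset hx).1)
          ((extremePoints_subset hx).2 y (extremePoints_subset hy).1))
      · exact hI x (hsub hx) y (hsub hy) j (by simp [hji, hj])
    have hint : ∀ x ∈ V, ∃ m : ℤ, x i = m := fun x hx => by
      obtain ⟨m, -, hm⟩ := hk x hx i
      exact ⟨m, by simp [hm]⟩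
    obtain ⟨p₀, hp₀⟩ := exists_walk_through_toExposed hV (-ContinuousLinearMap.proj i)
      (fun x hx => by obtain ⟨m, hm⟩ := hint x hx; exact ⟨-m, by simp [hm]⟩) (M := 0)
      (fun x hx => by obtain ⟨m, -, hm⟩ := hk x hx i; simp [hm])
      (hface _ fun x y h => by simpa using h) hu hv
    obtain ⟨p₁, hp₁⟩ := exists_walk_through_toExposed hV (ContinuousLinearMap.proj i) hint
      (M := k) (fun x hx => by obtain ⟨m, hmk, hm⟩ := hk x hx i; simp [hm, hmk])
      (hface _ fun x y h => h) hu hv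
    simp only [neg_apply, ContinuousLinearMap.proj_apply, Nat.cast_mul] at hp₀ hp₁
    -- The two routes together cost at most `2 k` outside the faces.
    obtain ⟨p, hp⟩ : ∃ p : (edgeGraph d (convexHull ℝ V)).Walk u v,
        (p.length : ℝ) ≤ k * (I.card + 1) := by
      rcases le_total p₀.length p₁.length with h | h
      · exact ⟨p₀, by linarith [(Nat.cast_le (α := ℝ)).2 h]⟩
      · exact ⟨p₁, by linarith [(Nat.cast_le (α := ℝ)).2 h]⟩
    rw [Finset.card_insert_of_notMem hi]
    exact ⟨p, by exact_mod_cast hp⟩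

end Walks

theorem kleinschmidt_onn_general (d k : ℕ)
    (P : Set (Fin d → ℝ)) (hP : IsLatticePolytope d k P) :
    polyDiam d P ≤ k * d := by
  obtain ⟨V, -, hV, rfl⟩ := hP
  refine csSup_le' ?_
  rintro _ ⟨u, hu, v, hv, rfl⟩
  obtain ⟨p, hp⟩ := exists_walk_length_le_mul_card k Finset.univ V.finite_toSet hV
    (by simp) hu hv
  exact (SimpleGraph.dist_le p).trans (by simpa using hp)

theorem kleinschmidt_onn (d k : ℕ) (hd : 1 ≤ d) (hk : 1 ≤ k)
    (P : Set (Fin d → ℝ)) (hP : IsLatticePolytope d k P) :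
    polyDiam d P ≤ k * d :=
  kleinschmidt_onn_general d k P hP
end

section
/- Let P be a lattice (d,k)-polytope with d ≥ 3 and let u, v be vertices at edge-graph distance δ(d−1,k)+k. Then every edge of P incident to u or to v is {−1,0,1}-valued, i.e., its edge direction vector has all coordinates in {−1,0,1}. -/
open Set

/-! Suppose an edge `[a, b]` at `a ∈ {u, v}` had a coordinate `i` with `|bᵢ - aᵢ| ≥ 2`, say
`bᵢ ≥ aᵢ + 2`, and let `w` be the other vertex of the pair. One can walk from `a` to `w` along
`[a, b]`, then up to the face `xᵢ = max` by edges that increase `xᵢ` (simplex method; by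
integrality each step gains at least `1`, so at most `max - bᵢ` steps), across that face, which
is a lattice `(d - 1, k)`-polytope (at most `δ(d - 1, k)` steps), and down to `w` (at most
`max - wᵢ` steps). Going instead through the face `xᵢ = min` costs at most
`aᵢ - min + δ(d - 1, k) + wᵢ - min`. The two lengths add up to at most
`2 δ(d - 1, k) + 2k - 1`, so one of them is shorter than `δ(d - 1, k) + k`. -/

section Convex

variable {E F : Type*} [AddCommGroup E] [Module ℝ E] [AddCommGroup F] [Module ℝ F]
  {φ : E →ᵃ[ℝ] F} {A B : Set E}

theorem IsExtreme.image_affineMap (h : IsExtreme ℝ A B) (hφ : Function.Injective φ) :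
    IsExtreme ℝ (φ '' A) (φ '' B) := by
  refine ⟨image_mono h.1, ?_⟩
  rintro _ ⟨x₁, hx₁, rfl⟩ _ ⟨x₂, hx₂, rfl⟩ _ ⟨x, hx, rfl⟩ hseg
  rw [← image_openSegment, hφ.mem_set_image] at hseg
  exact mem_image_of_mem φ (h.2 hx₁ hx₂ hx hseg)

theorem mem_extremePoints_of_image_affineMap (hφ : Function.Injective φ) {x : E} (hx : x ∈ A)
    (h : φ x ∈ (φ '' A).extremePoints ℝ) : x ∈ A.extremePoints ℝ := by
  refine mem_extremePoints_iff_left.2 ⟨hx, fun x₁ hx₁ x₂ hx₂ hseg => hφ ?_⟩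
  exact (mem_extremePoints_iff_left.1 h).2 _ (mem_image_of_mem φ hx₁) _ (mem_image_of_mem φ hx₂)
    (image_openSegment ℝ φ x₁ x₂ ▸ mem_image_of_mem φ hseg)

theorem left_mem_extremePoints_segment {a b : E} (hab : a ≠ b) :
    a ∈ (segment ℝ a b).extremePoints ℝ := by
  have h0 : (0 : ℝ) ∈ (Icc (0 : ℝ) 1).extremePoints ℝ := by simp
  have h := (isExtreme_singleton.2 h0).image_affineMap (AffineMap.lineMap_injective ℝ hab)
  rw [image_singleton, AffineMap.lineMap_apply_zero, ← segment_eq_image_lineMap] at h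
  exact isExtreme_singleton.1 h

theorem exists_convexHull_eq_segment {T : Finset E} {x w : E} (hx : x ∈ T) (μ : E → ℝ)
    (hμ : ∀ z ∈ T, 0 ≤ μ z) (hT : ∀ z ∈ T, z - x = μ z • w) :
    ∃ y ∈ T, convexHull ℝ ↑T = segment ℝ x y ∧ ∀ z ∈ T, μ z ≤ μ y := by
  obtain ⟨y, hyT, hymax⟩ := T.exists_max_image μ ⟨x, hx⟩
  refine ⟨y, hyT, Subset.antisymm (convexHull_min (fun z hz => ?_) (convex_segment x y)) ?_, hymax⟩
  · refine segment_eq_image' ℝ x y ▸ ⟨μ z / μ y, ⟨div_nonneg (hμ z hz) (hμ y hyT), ?_⟩, ?_⟩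
    · exact div_le_one_of_le₀ (hymax z hz) (hμ y hyT)
    · have hzy : μ y = 0 → μ z = 0 := fun h => le_antisymm (h ▸ hymax z hz) (hμ z hz)
      dsimp only
      rw [hT y hyT, smul_smul, div_mul_cancel_of_imp hzy, ← hT z hz, add_sub_cancel]
  · rw [← convexHull_pair]
    exact convexHull_mono (pair_subset (Finset.mem_coe.2 hx) hyT)

end Convex

section Polytope

variable {E : Type*} [NormedAddCommGroup E] [NormedSpace ℝ E] {V : Finset E}

theorem convexHull_filter_eq_of_le (l : E →L[ℝ] ℝ) {c : ℝ} (hV : ∀ y ∈ V, l y ≤ c) :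
    convexHull ℝ (V.filter (l · = c) : Set E) = {z ∈ convexHull ℝ ↑V | l z = c} := by
  refine Subset.antisymm (convexHull_min (fun y hy => ?_) ?_) ?_
  · rw [Finset.coe_filter] at hy
    exact ⟨subset_convexHull ℝ _ hy.1, hy.2⟩
  · exact (convex_convexHull ℝ _).inter (convex_hyperplane l.isLinear c)
  rintro z ⟨hz, hlz⟩
  obtain ⟨w, hw₀, hw₁, rfl⟩ := Finset.mem_convexHull'.1 hz
  have hslack : ∑ y ∈ V, w y * (c - l y) = 0 := by
    simp only [map_sum, map_smul, smul_eq_mul] at hlz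
    simp only [mul_sub, Finset.sum_sub_distrib, ← Finset.sum_mul, hw₁, one_mul, hlz, sub_self]
  have hzero : ∀ y ∈ V, l y ≠ c → w y = 0 := by
    intro y hy hne
    have := (Finset.sum_eq_zero_iff_of_nonneg fun y hy =>
      mul_nonneg (hw₀ y hy) (sub_nonneg.2 (hV y hy))).1 hslack y hy
    exact (mul_eq_zero.1 this).resolve_right (sub_ne_zero.2 hne.symm)
  refine Finset.mem_convexHull'.2 ⟨w, fun y hy => hw₀ y (Finset.mem_filter.1 hy).1, ?_, ?_⟩
  · rwa [Finset.sum_filter_of_ne fun y hy hwy => by_contra fun hne => hwy (hzero y hy hne)]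
  · rw [Finset.sum_filter_of_ne fun y hy hwy => by_contra fun hne => hwy (by
      rw [hzero y hy hne, zero_smul])]

theorem isExtreme_convexHull_filter_of_le (l : E →L[ℝ] ℝ) {c : ℝ} (hV : ∀ y ∈ V, l y ≤ c) :
    IsExtreme ℝ (convexHull ℝ ↑V) (convexHull ℝ (V.filter (l · = c) : Set E)) := by
  rw [convexHull_filter_eq_of_le l hV]
  have hle : ∀ z ∈ convexHull ℝ ↑V, l z ≤ c := fun z hz =>
    convexHull_min hV (convex_halfSpace_le l.isLinear c) hz
  refine IsExposed.isExtreme fun ⟨z₀, hz₀, hlz₀⟩ => ⟨l, ?_⟩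
  ext z
  exact and_congr_right fun hz =>
    ⟨fun h y hy => h ▸ hle y hy, fun h => le_antisymm (hle z hz) (hlz₀ ▸ h z₀ hz₀)⟩

theorem exists_dual_lt_of_mem_extremePoints_convexHull {s : Set E} (hs : s.Finite) {x : E}
    (hx : x ∈ (convexHull ℝ s).extremePoints ℝ) : ∃ g : E →L[ℝ] ℝ, ∀ y ∈ s, y ≠ x → g y < g x := by
  have hnot : x ∉ convexHull ℝ (s \ {x}) := fun h =>
    ((convex_convexHull ℝ _).mem_extremePoints_iff_mem_sdiff_convexHull_sdiff.1 hx).2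
      (convexHull_mono (sdiff_subset_sdiff_left (subset_convexHull ℝ _)) h)
  obtain ⟨g, u, hgu, hux⟩ := geometric_hahn_banach_closed_point (convex_convexHull ℝ _)
    (hs.sdiff.isCompact_convexHull (𝕜 := ℝ)).isClosed hnot
  exact ⟨g, fun y hy hyx => (hgu y (subset_convexHull ℝ _ ⟨hy, hyx⟩)).trans hux⟩

theorem exists_mem_extremePoints_convexHull_forall_le {s : Set E} (hs : s.Finite)
    (hne : s.Nonempty) (f : E →L[ℝ] ℝ) :
    ∃ e ∈ (convexHull ℝ s).extremePoints ℝ, ∀ y ∈ s, f y ≤ f e := by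
  have hK : IsCompact (convexHull ℝ s) := hs.isCompact_convexHull (𝕜 := ℝ)
  obtain ⟨z, hz, hzmax⟩ := hK.exists_isMaxOn hne.convexHull f.continuous.continuousOn
  have hF : IsExposed ℝ (convexHull ℝ s) (f.toExposed (convexHull ℝ s)) :=
    ContinuousLinearMap.toExposed.isExposed
  obtain ⟨e, he⟩ := (hF.isCompact hK).extremePoints_nonempty ⟨z, hz, hzmax⟩
  exact ⟨e, hF.isExtreme.extremePoints_subset_extremePoints he,
    fun y hy => (extremePoints_subset he).2 y (subset_convexHull ℝ _ hy)⟩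

/-- The vertex figure of `conv V` at `x`, translated to the origin: the ray from `x` through each
`y ∈ V \ {x}` is cut where `g` has dropped by `1`. -/
def vertexFigure (g : E →L[ℝ] ℝ) (x : E) (V : Set E) : Set E :=
  (fun y => (g x - g y)⁻¹ • (y - x)) '' (V \ {x})

variable {x : E} {g : E →L[ℝ] ℝ}

theorem tilt_le_and_eq_iff_of_exposes_vertexFigure (hg : ∀ y ∈ V, y ≠ x → g y < g x)
    {h : E →L[ℝ] ℝ} {w₀ : E} (hh : ∀ w ∈ vertexFigure g x V, w ≠ w₀ → h w < h w₀) {y : E}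
    (hy : y ∈ V) :
    (h + h w₀ • g) y ≤ (h + h w₀ • g) x ∧
      ((h + h w₀ • g) y = (h + h w₀ • g) x ↔ y - x = (g x - g y) • w₀) := by
  rcases eq_or_ne y x with rfl | hyx
  · simp
  set μ := g x - g y
  have hμ : 0 < μ := sub_pos.2 (hg y hy hyx)
  set w := μ⁻¹ • (y - x)
  have hyw : y - x = μ • w := (smul_inv_smul₀ hμ.ne' _).symm
  have hH : (h + h w₀ • g) y - (h + h w₀ • g) x = μ * (h w - h w₀) := by
    have := congrArg h hyw
    rw [map_sub, map_smul, smul_eq_mul] at this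
    simp only [add_apply, smul_apply, smul_eq_mul, μ]
    linear_combination this
  rcases eq_or_ne w w₀ with hw | hw
  · rw [hw, sub_self, mul_zero, sub_eq_zero] at hH
    exact ⟨hH.le, iff_of_true hH (hw ▸ hyw)⟩
  · have hlt := hh w ⟨y, ⟨hy, hyx⟩, rfl⟩ hw
    refine ⟨by nlinarith, iff_of_false (by nlinarith) fun h' => hw ?_⟩
    exact smul_right_injective E hμ.ne' (hyw.symm.trans h')

theorem exists_isExtreme_segment_of_mem_extremePoints_vertexFigure (hx : x ∈ V)
    (hg : ∀ y ∈ V, y ≠ x → g y < g x) {w₀ : E}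
    (hw₀ : w₀ ∈ (convexHull ℝ (vertexFigure g x V)).extremePoints ℝ) :
    ∃ y ∈ V, y ≠ x ∧ IsExtreme ℝ (convexHull ℝ ↑V) (segment ℝ x y) ∧
      y - x = (g x - g y) • w₀ := by
  obtain ⟨h, hh⟩ := exists_dual_lt_of_mem_extremePoints_convexHull
    ((V.finite_toSet.sdiff).image _) hw₀
  have htilt y (hy : y ∈ V) := tilt_le_and_eq_iff_of_exposes_vertexFigure hg hh hy
  -- the face of `conv V` where the tilted functional is maximal lies on the ray from `x` along `w₀`
  set T := V.filter (fun y => (h + h w₀ • g) y = (h + h w₀ • g) x)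
  have hT : ∀ z ∈ T, z - x = (g x - g z) • w₀ := fun z hz =>
    (htilt z (Finset.mem_filter.1 hz).1).2.1 (Finset.mem_filter.1 hz).2
  have hgle : ∀ z ∈ V, g z ≤ g x := fun z hz =>
    (eq_or_ne z x).elim (fun h => h ▸ le_rfl) fun h => (hg z hz h).le
  obtain ⟨y, hyT, hseg, hymax⟩ := exists_convexHull_eq_segment
    (show x ∈ T from Finset.mem_filter.2 ⟨hx, rfl⟩) (fun z => g x - g z)
    (fun z hz => sub_nonneg.2 (hgle z (Finset.mem_filter.1 hz).1)) hT
  obtain ⟨y₀, ⟨hy₀V, hy₀x⟩, hy₀w₀⟩ := extremePoints_convexHull_subset hw₀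
  have hy₀T : y₀ ∈ T := Finset.mem_filter.2 ⟨hy₀V, (htilt y₀ hy₀V).2.2 (by
    rw [← hy₀w₀, smul_inv_smul₀ (sub_pos.2 (hg y₀ hy₀V hy₀x)).ne'])⟩
  have hyx : y ≠ x := by
    rintro rfl
    exact (sub_pos.2 (hg y₀ hy₀V hy₀x)).not_ge ((hymax y₀ hy₀T).trans_eq (sub_self _))
  exact ⟨y, (Finset.mem_filter.1 hyT).1, hyx,
    hseg ▸ isExtreme_convexHull_filter_of_le _ fun z hz => (htilt z hz).1, hT y hyT⟩

theorem exists_isExtreme_segment_of_lt_s11 (hx : x ∈ (convexHull ℝ ↑V).extremePoints ℝ)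
    (f : E →L[ℝ] ℝ) {p : E} (hp : p ∈ V) (hfp : f x < f p) :
    ∃ y ∈ V, y ≠ x ∧ IsExtreme ℝ (convexHull ℝ ↑V) (segment ℝ x y) ∧ f x < f y := by
  obtain ⟨g, hg⟩ := exists_dual_lt_of_mem_extremePoints_convexHull V.finite_toSet hx
  have hpx : p ≠ x := by rintro rfl; exact hfp.false
  have hp' : (g x - g p)⁻¹ • (p - x) ∈ vertexFigure g x V := ⟨p, ⟨hp, hpx⟩, rfl⟩
  -- an `f`-maximal vertex of the vertex figure is the direction of an `f`-improving edge
  obtain ⟨w₀, hw₀, hfw₀⟩ := exists_mem_extremePoints_convexHull_forall_le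
    ((V.finite_toSet.sdiff).image _) ⟨_, hp'⟩ f
  have hfw₀pos : 0 < f w₀ := by
    refine lt_of_lt_of_le ?_ (hfw₀ _ hp')
    rw [map_smul, map_sub, smul_eq_mul]
    exact mul_pos (inv_pos.2 (sub_pos.2 (hg p hp hpx))) (sub_pos.2 hfp)
  obtain ⟨y, hyV, hyx, hseg, hyw₀⟩ := exists_isExtreme_segment_of_mem_extremePoints_vertexFigure
    (extremePoints_convexHull_subset hx) hg hw₀
  refine ⟨y, hyV, hyx, hseg, sub_pos.1 ?_⟩
  rw [← map_sub, hyw₀, map_smul, smul_eq_mul]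
  exact mul_pos (sub_pos.2 (hg y hyV hyx)) hfw₀pos

end Polytope

section EdgeGraph

variable {d : ℕ}

theorem mem_extremePoints_of_edgeGraph_adj {P : Set (Fin d → ℝ)} {a b : Fin d → ℝ}
    (h : (edgeGraph d P).Adj a b) : a ∈ P.extremePoints ℝ :=
  h.2.extremePoints_subset_extremePoints (left_mem_extremePoints_segment h.1)

theorem mem_extremePoints_of_mem_support {P : Set (Fin d → ℝ)} {x y : Fin d → ℝ}
    (hx : x ∈ P.extremePoints ℝ) (p : (edgeGraph d P).Walk x y) {v : Fin d → ℝ}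
    (hv : v ∈ p.support) : v ∈ P.extremePoints ℝ := by
  induction p with
  | nil => exact List.mem_singleton.1 hv ▸ hx
  | cons h p ih =>
    rcases List.mem_cons.1 hv with rfl | hv
    exacts [hx, ih (mem_extremePoints_of_edgeGraph_adj h.symm) hv]

def edgeGraphHom {m n : ℕ} {A : Set (Fin m → ℝ)} {P : Set (Fin n → ℝ)}
    (φ : (Fin m → ℝ) →ᵃ[ℝ] (Fin n → ℝ)) (hφ : Function.Injective φ)
    (hA : IsExtreme ℝ P (φ '' A)) : edgeGraph m A →g edgeGraph n P where
  toFun := φ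
  map_rel' h := ⟨hφ.ne h.1, hA.trans (image_segment ℝ φ _ _ ▸ h.2.image_affineMap hφ)⟩

variable {V : Finset (Fin d → ℝ)}

theorem exists_walk_to_max (f : (Fin d → ℝ) →L[ℝ] ℝ) {δ : ℝ}
    (hδ : ∀ y ∈ V, ∀ y' ∈ V, f y < f y' → f y + δ ≤ f y') {x : Fin d → ℝ}
    (hx : x ∈ (convexHull ℝ ↑V).extremePoints ℝ) :
    ∃ z ∈ (convexHull ℝ ↑V).extremePoints ℝ, (∀ y ∈ V, f y ≤ f z) ∧
      ∃ p : (edgeGraph d (convexHull ℝ ↑V)).Walk x z,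
        δ * p.length ≤ f z - f x := by
  induction hN : (V.filter (f x < f ·)).card using Nat.strong_induction_on generalizing x with
  | _ N ih =>
  by_cases hmax : ∀ y ∈ V, f y ≤ f x
  · exact ⟨x, hx, hmax, .nil, by simp⟩
  push Not at hmax
  obtain ⟨p, hp, hfp⟩ := hmax
  obtain ⟨y, hyV, hyx, hseg, hfy⟩ := exists_isExtreme_segment_of_lt_s11 hx f hp hfp
  have hadj : (edgeGraph d _).Adj x y := ⟨hyx.symm, hseg⟩
  have hcard : (V.filter (f y < f ·)).card < N := hN ▸ Finset.card_lt_card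
    ⟨Finset.monotone_filter_right _ fun _ _ h => hfy.trans h,
      fun h => (Finset.mem_filter.1 (h (Finset.mem_filter.2 ⟨hyV, hfy⟩))).2.false⟩
  obtain ⟨z, hz, hzmax, q, hq⟩ :=
    ih _ hcard (mem_extremePoints_of_edgeGraph_adj hadj.symm) rfl
  refine ⟨z, hz, hzmax, .cons hadj q, ?_⟩
  rw [SimpleGraph.Walk.length_cons]
  push_cast
  linarith [hδ x (extremePoints_convexHull_subset hx) y hyV hfy]

theorem reachable_of_mem_extremePoints {x z : Fin d → ℝ}
    (hx : x ∈ (convexHull ℝ ↑V).extremePoints ℝ)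
    (hz : z ∈ (convexHull ℝ ↑V).extremePoints ℝ) :
    (edgeGraph d (convexHull ℝ ↑V)).Reachable x z := by
  obtain ⟨g, hg⟩ := exists_dual_lt_of_mem_extremePoints_convexHull V.finite_toSet hz
  obtain ⟨z', hz', hz'max, p, -⟩ :=
    exists_walk_to_max g (δ := 0) (fun _ _ _ _ h => (add_zero _).trans_le h.le) hx
  obtain rfl : z' = z := by
    by_contra hne
    exact (hg z' (extremePoints_convexHull_subset hz') hne).not_ge
      (hz'max z (extremePoints_convexHull_subset hz))
  exact ⟨p⟩

end EdgeGraph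

section Lattice

variable {d k : ℕ}

def IsLatticeFinset (k : ℕ) (V : Finset (Fin d → ℝ)) : Prop :=
  ∀ x ∈ V, ∀ i, ∃ m : ℕ, m ≤ k ∧ x i = m

theorem IsLatticeFinset.card_le {V : Finset (Fin d → ℝ)} (hV : IsLatticeFinset k V) :
    V.card ≤ (k + 1) ^ d := by
  have hsub : V ⊆ Finset.univ.image fun m : Fin d → Fin (k + 1) => fun i => ((m i : ℕ) : ℝ) := by
    intro x hx
    choose m hm using hV x hx
    exact Finset.mem_image.2 ⟨fun i => ⟨m i, Nat.lt_succ_of_le (hm i).1⟩, Finset.mem_univ _,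
      funext fun i => (hm i).2.symm⟩
  exact (Finset.card_le_card hsub).trans (Finset.card_image_le.trans (by simp))

theorem IsLatticePolytope.dist_le {P : Set (Fin d → ℝ)} (hP : IsLatticePolytope d k P)
    {x : Fin d → ℝ} (hx : x ∈ P.extremePoints ℝ) (y : Fin d → ℝ) :
    (edgeGraph d P).dist x y ≤ (k + 1) ^ d := by
  obtain ⟨V, -, hV, rfl⟩ := hP
  by_cases hxy : (edgeGraph d (convexHull ℝ ↑V)).Reachable x y
  · obtain ⟨p, hp, hlen⟩ := hxy.exists_path_of_dist
    have hsupp : p.support.toFinset ⊆ V := fun v hv => extremePoints_convexHull_subset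
      (mem_extremePoints_of_mem_support hx p (List.mem_toFinset.1 hv))
    have := (Finset.card_le_card hsupp).trans (IsLatticeFinset.card_le hV)
    rw [List.toFinset_card_of_nodup hp.support_nodup, SimpleGraph.Walk.length_support] at this
    omega
  · simp [SimpleGraph.dist_eq_zero_of_not_reachable hxy]

theorem IsLatticePolytope.polyDiam_le {P : Set (Fin d → ℝ)} (hP : IsLatticePolytope d k P) :
    polyDiam d P ≤ (k + 1) ^ d :=
  csSup_le' fun _ ⟨_, hx, _, _, h⟩ => h ▸ hP.dist_le hx _

theorem IsLatticePolytope.dist_le_deltaLP {P : Set (Fin d → ℝ)} (hP : IsLatticePolytope d k P)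
    {x y : Fin d → ℝ} (hx : x ∈ P.extremePoints ℝ) (hy : y ∈ P.extremePoints ℝ) :
    (edgeGraph d P).dist x y ≤ deltaLP d k :=
  calc (edgeGraph d P).dist x y ≤ polyDiam d P :=
        le_csSup ⟨(k + 1) ^ d, fun _ ⟨_, hx, _, _, h⟩ => h ▸ hP.dist_le hx _⟩ ⟨x, hx, y, hy, rfl⟩
    _ ≤ deltaLP d k :=
        le_csSup ⟨(k + 1) ^ d, fun _ ⟨_, hP', h⟩ => h ▸ hP'.polyDiam_le⟩ ⟨P, hP, rfl⟩

theorem IsLatticeFinset.exists_walk_length_le_deltaLP {V : Finset (Fin d → ℝ)}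
    (hV : IsLatticeFinset k V) {x y : Fin d → ℝ}
    (hx : x ∈ (convexHull ℝ ↑V).extremePoints ℝ)
    (hy : y ∈ (convexHull ℝ ↑V).extremePoints ℝ) :
    ∃ p : (edgeGraph d (convexHull ℝ ↑V)).Walk x y, p.length ≤ deltaLP d k := by
  obtain ⟨p, hp⟩ := (reachable_of_mem_extremePoints hx hy).exists_walk_length_eq_dist
  exact ⟨p, hp ▸ IsLatticePolytope.dist_le_deltaLP
    ⟨V, ⟨x, extremePoints_convexHull_subset hx⟩, hV, rfl⟩ hx hy⟩

end Lattice

section CoordinateFace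

variable {n k : ℕ}

def insertNthAffineMap (i : Fin (n + 1)) (c : ℝ) : (Fin n → ℝ) →ᵃ[ℝ] (Fin (n + 1) → ℝ) where
  toFun w := i.insertNth c w
  linear :=
    { toFun w := i.insertNth 0 w
      map_add' v w := by simp only [← Fin.insertNth_add, add_zero]
      map_smul' a w := by
        refine Fin.insertNth_eq_iff.2 ⟨?_, funext fun j => ?_⟩ <;> simp [Fin.removeNth] }
  map_vadd' w v := by simp [← Fin.insertNth_add]

theorem insertNthAffineMap_apply (i : Fin (n + 1)) (c : ℝ) (w : Fin n → ℝ) :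
    insertNthAffineMap i c w = i.insertNth c w :=
  rfl

theorem insertNthAffineMap_injective (i : Fin (n + 1)) (c : ℝ) :
    Function.Injective (insertNthAffineMap i c) :=
  fun v w h => by simpa [insertNthAffineMap_apply] using congrArg i.removeNth h

theorem IsLatticeFinset.exists_walk_length_le_deltaLP_of_coord_face
    {V T : Finset (Fin (n + 1) → ℝ)} (hT : IsLatticeFinset k T)
    (hTV : IsExtreme ℝ (convexHull ℝ (V : Set (Fin (n + 1) → ℝ))) (convexHull ℝ ↑T))
    {i : Fin (n + 1)} {c : ℝ} (hTc : ∀ t ∈ T, t i = c) {z z' : Fin (n + 1) → ℝ}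
    (hz : z ∈ T) (hz' : z' ∈ T) (hzV : z ∈ (convexHull ℝ ↑V).extremePoints ℝ)
    (hz'V : z' ∈ (convexHull ℝ ↑V).extremePoints ℝ) :
    ∃ p : (edgeGraph (n + 1) (convexHull ℝ ↑V)).Walk z z',
      p.length ≤ deltaLP n k := by
  set σ := insertNthAffineMap i c
  set T' := T.image i.removeNth
  have hσ : ∀ t ∈ T, σ (i.removeNth t) = t := fun t ht => by
    rw [insertNthAffineMap_apply, ← hTc t ht, Fin.insertNth_self_removeNth]
  have himage : σ '' convexHull ℝ ↑T' = convexHull ℝ ↑T := by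
    rw [AffineMap.image_convexHull, Finset.coe_image, ← image_comp]
    exact congrArg _ ((image_congr hσ).trans (image_id _))
  have hT' : IsLatticeFinset k T' := by
    simp only [IsLatticeFinset, T', Finset.mem_image]
    rintro _ ⟨t, ht, rfl⟩ j
    exact hT t ht _
  have hvertex : ∀ t ∈ T, t ∈ (convexHull ℝ ↑V).extremePoints ℝ →
      i.removeNth t ∈ (convexHull ℝ ↑T').extremePoints ℝ := fun t ht htV =>
    mem_extremePoints_of_image_affineMap (insertNthAffineMap_injective i c)
      (subset_convexHull ℝ _ (Finset.mem_coe.2 (Finset.mem_image_of_mem _ ht)))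
      (by rw [himage, hσ t ht]
          exact inter_extremePoints_subset_extremePoints_of_subset hTV.1
            ⟨subset_convexHull ℝ _ ht, htV⟩)
  obtain ⟨p, hp⟩ := hT'.exists_walk_length_le_deltaLP (hvertex z hz hzV) (hvertex z' hz' hz'V)
  let φ := edgeGraphHom σ (insertNthAffineMap_injective i c) (himage ▸ hTV)
  have hφ : ∀ t ∈ T, φ (i.removeNth t) = t := hσ
  refine ⟨(p.map φ).copy (hφ z hz) (hφ z' hz'), ?_⟩
  rwa [SimpleGraph.Walk.length_copy, SimpleGraph.Walk.length_map]

variable {V : Finset (Fin (n + 1) → ℝ)}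

theorem IsLatticeFinset.exists_walk_via_max_coord_face (hV : IsLatticeFinset k V) (i : Fin (n + 1))
    {σ : ℝ} (hσ : σ = 1 ∨ σ = -1) {M : ℝ} (hM : ∀ z ∈ V, σ * z i ≤ M) {x y : Fin (n + 1) → ℝ}
    (hx : x ∈ (convexHull ℝ ↑V).extremePoints ℝ)
    (hy : y ∈ (convexHull ℝ ↑V).extremePoints ℝ) :
    ∃ p : (edgeGraph (n + 1) (convexHull ℝ ↑V)).Walk x y,
      (p.length : ℝ) ≤ (M - σ * x i) + deltaLP n k + (M - σ * y i) := by
  set f : (Fin (n + 1) → ℝ) →L[ℝ] ℝ := σ • ContinuousLinearMap.proj i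
  have hf : ∀ z, f z = σ * z i := fun z => rfl
  have hint : ∀ z ∈ V, ∃ m : ℤ, f z = m := fun z hz => by
    obtain ⟨m, -, hm⟩ := hV z hz i
    rcases hσ with rfl | rfl
    exacts [⟨m, by simp [hf, hm]⟩, ⟨-m, by simp [hf, hm]⟩]
  have hgap : ∀ z ∈ V, ∀ z' ∈ V, f z < f z' → f z + 1 ≤ f z' := fun z hz z' hz' hlt => by
    obtain ⟨m, hm⟩ := hint z hz
    obtain ⟨m', hm'⟩ := hint z' hz'
    rw [hm, hm'] at hlt ⊢
    exact_mod_cast Int.add_one_le_of_lt (by exact_mod_cast hlt)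
  obtain ⟨z, hz, hzmax, p, hp⟩ := exists_walk_to_max f hgap hx
  obtain ⟨z', hz', hz'max, q, hq⟩ := exists_walk_to_max f hgap hy
  have hzV := extremePoints_convexHull_subset hz
  have hz'V := extremePoints_convexHull_subset hz'
  have hzz' : f z' = f z := le_antisymm (hzmax z' hz'V) (hz'max z hzV)
  set T := V.filter (f · = f z)
  have hTc : ∀ t ∈ T, t i = σ * f z := fun t ht => by
    rw [← (Finset.mem_filter.1 ht).2, hf, ← mul_assoc]
    rcases hσ with rfl | rfl <;> norm_num
  obtain ⟨r, hr⟩ := IsLatticeFinset.exists_walk_length_le_deltaLP_of_coord_face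
    (fun t ht => hV t (Finset.mem_filter.1 ht).1) (isExtreme_convexHull_filter_of_le f hzmax) hTc
    (Finset.mem_filter.2 ⟨hzV, rfl⟩) (Finset.mem_filter.2 ⟨hz'V, hzz'⟩) hz hz'
  refine ⟨p.append (r.append q.reverse), ?_⟩
  simp only [SimpleGraph.Walk.length_append, SimpleGraph.Walk.length_reverse, Nat.cast_add]
  have hr' : (r.length : ℝ) ≤ deltaLP n k := by exact_mod_cast hr
  linarith [hM z hzV, hf x, hf y, hf z]

theorem IsLatticeFinset.dist_lt_of_two_le_abs_sub (hV : IsLatticeFinset k V)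
    {a b v : Fin (n + 1) → ℝ}
    (hab : (edgeGraph (n + 1) (convexHull ℝ ↑V)).Adj a b)
    (hv : v ∈ (convexHull ℝ ↑V).extremePoints ℝ) {i : Fin (n + 1)}
    (hi : 2 ≤ |b i - a i|) :
    (edgeGraph (n + 1) (convexHull ℝ ↑V)).dist a v < deltaLP n k + k := by
  obtain ⟨σ, hσ, hjump⟩ : ∃ σ : ℝ, (σ = 1 ∨ σ = -1) ∧ 2 ≤ σ * (b i - a i) := by
    rcases le_abs'.1 hi with h | h
    exacts [⟨-1, Or.inr rfl, by linarith⟩, ⟨1, Or.inl rfl, by linarith⟩]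
  have hbounds : ∀ z ∈ V, 0 ≤ z i ∧ z i ≤ k := fun z hz => by
    obtain ⟨m, hmk, hm⟩ := hV z hz i
    exact ⟨hm ▸ m.cast_nonneg, hm ▸ Nat.cast_le.2 hmk⟩
  have hup : ∀ z ∈ V, σ * z i ≤ (1 + σ) / 2 * k := fun z hz => by
    rcases hσ with rfl | rfl <;> linarith [hbounds z hz]
  have hdown : ∀ z ∈ V, -σ * z i ≤ (1 - σ) / 2 * k := fun z hz => by
    rcases hσ with rfl | rfl <;> linarith [hbounds z hz]
  have ha := mem_extremePoints_of_edgeGraph_adj hab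
  have hb := mem_extremePoints_of_edgeGraph_adj hab.symm
  obtain ⟨p, hp⟩ := hV.exists_walk_via_max_coord_face i hσ hup hb hv
  have hσ' : -σ = 1 ∨ -σ = -1 := by rcases hσ with rfl | rfl <;> norm_num
  obtain ⟨q, hq⟩ := hV.exists_walk_via_max_coord_face i hσ' hdown ha hv
  have hp' := Nat.cast_le (α := ℝ) |>.2 (SimpleGraph.dist_le (.cons hab p))
  have hq' := Nat.cast_le (α := ℝ) |>.2 (SimpleGraph.dist_le q)
  rw [SimpleGraph.Walk.length_cons, Nat.cast_succ] at hp'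
  have : ((edgeGraph (n + 1) (convexHull ℝ ↑V)).dist a v : ℝ) <
      deltaLP n k + k := by
    linarith
  exact_mod_cast this

end CoordinateFace

theorem cond2_edges_pm1_general (d k : ℕ)
    (P : Set (Fin d → ℝ)) (hP : IsLatticePolytope d k P)
    (u v : Fin d → ℝ) (hu : u ∈ P.extremePoints ℝ) (hv : v ∈ P.extremePoints ℝ)
    (hdist : (edgeGraph d P).dist u v = deltaLP (d - 1) k + k) :
    ∀ a b : Fin d → ℝ, (edgeGraph d P).Adj a b → (a = u ∨ a = v) →
      ∃ w : Fin d → ℤ, (∀ i, w i = -1 ∨ w i = 0 ∨ w i = 1) ∧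
        ∃ c : ℝ, 0 < c ∧ ∀ i, b i - a i = c * (w i : ℝ) := by
  intro a b hab ha
  obtain ⟨V, -, hV, rfl⟩ := hP
  choose ma _ hma using hV a
    (extremePoints_convexHull_subset (mem_extremePoints_of_edgeGraph_adj hab))
  choose mb _ hmb using hV b
    (extremePoints_convexHull_subset (mem_extremePoints_of_edgeGraph_adj hab.symm))
  refine ⟨fun i => mb i - ma i, fun i => ?_, 1, one_pos, fun i => by simp [hma, hmb]⟩
  by_contra hsmall
  dsimp only at hsmall
  have hi : 2 ≤ |b i - a i| := by
    have : (2 : ℤ) ≤ mb i - ma i ∨ (2 : ℤ) ≤ -(mb i - ma i) := by omega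
    rw [hma, hmb, le_abs]
    exact_mod_cast this
  obtain ⟨n, rfl⟩ : ∃ n, d = n + 1 := ⟨d - 1, by have := i.pos; omega⟩
  rw [Nat.add_sub_cancel] at hdist
  rcases ha with rfl | rfl
  · exact (IsLatticeFinset.dist_lt_of_two_le_abs_sub hV hab hv hi).ne hdist
  · exact (IsLatticeFinset.dist_lt_of_two_le_abs_sub hV hab hu hi).ne
      (SimpleGraph.dist_comm ▸ hdist)

theorem cond2_edges_pm1 (d k : ℕ) (hd : 3 ≤ d)
    (P : Set (Fin d → ℝ)) (hP : IsLatticePolytope d k P)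
    (u v : Fin d → ℝ) (hu : u ∈ P.extremePoints ℝ) (hv : v ∈ P.extremePoints ℝ)
    (hdist : (edgeGraph d P).dist u v = deltaLP (d - 1) k + k) :
    ∀ a b : Fin d → ℝ, (edgeGraph d P).Adj a b → (a = u ∨ a = v) →
      ∃ w : Fin d → ℤ, (∀ i, w i = -1 ∨ w i = 0 ∨ w i = 1) ∧
        ∃ c : ℝ, 0 < c ∧ ∀ i, b i - a i = c * (w i : ℝ) :=
  cond2_edges_pm1_general d k P hP u v hu hv hdist
end
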